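/- Let A, B be finite subsets of an abelian group G with 1 ∈ A ∩ B and |A| ≥ |B| ≥ 2. If α(A,B) ≥ 2 and w = min(α(A,B)−1, 1) = 1, then |N_1(A,B)| + |N_2(A,B)| > 2(|A| + |B| − 1 − α(A,B)) + 1; i.e., the main inequality is strict when t = 2 and α ≥ 2. -/

import Mathlib

open Finset Pointwise

variable {G : Type*} [CommGroup G] [DecidableEq G]

/-- Number of representations of `x` as a product `a * b` with `a ∈ A`, `b ∈ B`. -/
def rep (A B : Finset G) (x : G) : ℕ :=
  ((A ×ˢ B).filter (fun p => p.1 * p.2 = x)).card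

/-- Elements of `A * B` having at least `t` representations. -/
def N (t : ℕ) (A B : Finset G) : Finset G :=
  (A * B).filter (fun x => t ≤ rep A B x)

/-- `α(A,B)`: cardinality of the largest coset of a subgroup contained in `A * B`. -/
noncomputable def alphaC (A B : Finset G) : ℕ :=
  sSup {n | ∃ (H : Subgroup G) (g : G) (C : Finset G),
    (C : Set G) = g • (H : Set G) ∧ C ⊆ A * B ∧ C.card = n}

/-! ### Auxiliary lemmas -/

def Sg (A B : Finset G) : ℕ := (N 1 A B).card + (N 2 A B).card

lemma rep_mono {A A' B B' : Finset G} (hA : A ⊆ A') (hB : B ⊆ B') (x : G) :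
    rep A B x ≤ rep A' B' x :=
  Finset.card_le_card (Finset.filter_subset_filter _ (Finset.product_subset_product hA hB))

lemma rep_pos_iff {A B : Finset G} {x : G} : 0 < rep A B x ↔ x ∈ A * B := by
  rw [rep, Finset.card_pos]
  constructor
  · rintro ⟨p, hp⟩
    simp only [Finset.mem_filter, Finset.mem_product] at hp
    exact Finset.mem_mul.2 ⟨p.1, hp.1.1, p.2, hp.1.2, hp.2⟩
  · rintro hx
    obtain ⟨a, ha, b, hb, hab⟩ := Finset.mem_mul.1 hx
    exact ⟨(a, b), by simp [Finset.mem_filter, Finset.mem_product, ha, hb, hab]⟩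

lemma mem_mul_of_left {A B : Finset G} {x : G} (hx : x ∈ A) (h1B : (1 : G) ∈ B) :
    x ∈ A * B :=
  Finset.mem_mul.2 ⟨x, hx, 1, h1B, mul_one x⟩

lemma two_le_rep {A B : Finset G} {x a b : G} (hx : x ∈ A) (h1B : (1 : G) ∈ B)
    (ha : a ∈ A) (hb : b ∈ B) (hab : a * b = x) (hbne : b ≠ 1) : 2 ≤ rep A B x := by
  rw [rep]
  refine Finset.one_lt_card.2 ⟨(x, 1), ?_, (a, b), ?_, ?_⟩
  · simp [Finset.mem_filter, Finset.mem_product, hx, h1B]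
  · simp [Finset.mem_filter, Finset.mem_product, ha, hb, hab]
  · intro h
    exact hbne (by simpa using (congrArg Prod.snd h).symm)

lemma N_subset_mul {i : ℕ} {A B : Finset G} : N i A B ⊆ A * B := Finset.filter_subset _ _

lemma N_le_of_rep {A A' B B' : Finset G} {i : ℕ} (hi : 1 ≤ i)
    (h : ∀ x, rep A' B' x ≤ rep A B x) : N i A' B' ⊆ N i A B := by
  intro x hx
  obtain ⟨hx1, hx2⟩ := Finset.mem_filter.1 hx
  have hr : i ≤ rep A B x := hx2.trans (h x)
  exact Finset.mem_filter.2 ⟨rep_pos_iff.1 (by omega), hr⟩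

lemma N_mono {A A' B B' : Finset G} {i : ℕ} (hi : 1 ≤ i) (hA : A' ⊆ A) (hB : B' ⊆ B) :
    N i A' B' ⊆ N i A B :=
  N_le_of_rep hi (rep_mono hA hB)

lemma N_one {A B : Finset G} : N 1 A B = A * B := by
  rw [N]
  exact Finset.filter_true_of_mem fun x hx => rep_pos_iff.2 hx

/-! ### alphaC lemmas -/

lemma alpha_bddAbove (A B : Finset G) : BddAbove {n | ∃ (H : Subgroup G) (g : G) (C : Finset G),
    (C : Set G) = g • (H : Set G) ∧ C ⊆ A * B ∧ C.card = n} := by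
  refine ⟨(A * B).card, ?_⟩
  rintro n ⟨H, g, C, h1, h2, rfl⟩
  exact Finset.card_le_card h2

lemma coset_card_le_alpha {A B : Finset G} (H : Subgroup G) (g : G) (C : Finset G)
    (h1 : (C : Set G) = g • (H : Set G)) (h2 : C ⊆ A * B) : C.card ≤ alphaC A B :=
  le_csSup (alpha_bddAbove A B) ⟨H, g, C, h1, h2, rfl⟩

lemma alpha_mono {A B C D : Finset G} (h : A * B ⊆ C * D) : alphaC A B ≤ alphaC C D := by
  refine csSup_le_csSup' (alpha_bddAbove C D) ?_
  rintro n ⟨H, g, C₀, h1, h2, h3⟩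
  exact ⟨H, g, C₀, h1, h2.trans h, h3⟩

lemma alpha_le_of_eq_smul {A B C D : Finset G} {g : G} (h : A * B = g • (C * D)) :
    alphaC A B ≤ alphaC C D := by
  refine csSup_le' ?_
  rintro n ⟨H, g', C₀, h1, h2, rfl⟩
  have hsub : g⁻¹ • C₀ ⊆ C * D := by
    have := Finset.smul_finset_subset_smul_finset (a := g⁻¹) h2
    rwa [h, inv_smul_smul] at this
  have hcoe : ((g⁻¹ • C₀ : Finset G) : Set G) = (g⁻¹ * g') • (H : Set G) := by
    rw [Finset.coe_smul_finset, h1, smul_smul]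
  calc C₀.card = (g⁻¹ • C₀).card := (Finset.card_smul_finset _ _).symm
    _ ≤ alphaC C D := coset_card_le_alpha H (g⁻¹ * g') _ hcoe hsub

lemma smul_mul_smul' (a b : G) (A B : Finset G) :
    (a • A) * (b • B) = (a * b) • (A * B) := by
  ext x
  simp only [Finset.mem_mul, Finset.mem_smul_finset, smul_eq_mul]
  constructor
  · rintro ⟨u, ⟨c, hc, rfl⟩, v, ⟨d, hd, rfl⟩, rfl⟩
    exact ⟨c * d, ⟨c, hc, d, hd, rfl⟩, (mul_mul_mul_comm a c b d).symm⟩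
  · rintro ⟨y, ⟨c, hc, d, hd, rfl⟩, rfl⟩
    exact ⟨a * c, ⟨c, hc, rfl⟩, b * d, ⟨d, hd, rfl⟩, mul_mul_mul_comm a c b d⟩

lemma alpha_smul (a b : G) (A B : Finset G) : alphaC (a • A) (b • B) = alphaC A B := by
  refine le_antisymm (alpha_le_of_eq_smul (smul_mul_smul' a b A B)) ?_
  refine alpha_le_of_eq_smul (g := (a * b)⁻¹) ?_
  rw [smul_mul_smul', inv_smul_smul]

lemma rep_smul (a b : G) (A B : Finset G) (x : G) :
    rep (a • A) (b • B) (a * b * x) = rep A B x := by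
  rw [rep, rep]
  refine Finset.card_nbij' (fun p => (a⁻¹ * p.1, b⁻¹ * p.2)) (fun p => (a * p.1, b * p.2))
    ?_ ?_ ?_ ?_
  · rintro ⟨u, v⟩ hp
    simp only [Finset.mem_coe, Finset.mem_filter, Finset.mem_product,
      Finset.mem_smul_finset, smul_eq_mul] at hp ⊢
    obtain ⟨⟨⟨c, hc, rfl⟩, ⟨d, hd, rfl⟩⟩, hmul⟩ := hp
    refine ⟨⟨by simpa using hc, by simpa using hd⟩, ?_⟩
    have h2 : a * c * (b * d) = a * b * x := hmul
    rw [mul_mul_mul_comm] at h2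
    have := mul_left_cancel h2
    simpa using this
  · rintro ⟨c, d⟩ hp
    simp only [Finset.mem_coe, Finset.mem_filter, Finset.mem_product,
      Finset.mem_smul_finset, smul_eq_mul] at hp ⊢
    obtain ⟨⟨hc, hd⟩, hmul⟩ := hp
    exact ⟨⟨⟨c, hc, rfl⟩, ⟨d, hd, rfl⟩⟩, by rw [mul_mul_mul_comm, hmul]⟩
  · rintro ⟨u, v⟩ _; simp
  · rintro ⟨c, d⟩ _; simp

lemma N_smul (i : ℕ) (a b : G) (A B : Finset G) :
    N i (a • A) (b • B) = (a * b) • N i A B := by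
  rw [N, N, smul_mul_smul' a b A B]
  ext y
  simp only [Finset.mem_filter, Finset.mem_smul_finset, smul_eq_mul]
  constructor
  · rintro ⟨⟨z, hz, rfl⟩, hrep⟩
    rw [rep_smul] at hrep
    exact ⟨z, ⟨hz, hrep⟩, rfl⟩
  · rintro ⟨z, ⟨hz, hrep⟩, rfl⟩
    exact ⟨⟨z, hz, rfl⟩, by rwa [rep_smul]⟩

lemma Sg_smul (a b : G) (A B : Finset G) : Sg (a • A) (b • B) = Sg A B := by
  rw [Sg, Sg, N_smul, N_smul, Finset.card_smul_finset, Finset.card_smul_finset]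

/-! ### The Dyson transform -/

lemma rep_transform (e : G) (A B : Finset G) (x : G) :
    rep (A ∪ e • B) (B ∩ e⁻¹ • A) x ≤ rep A B x := by
  classical
  rw [rep, rep]
  refine Finset.card_le_card_of_injOn
    (fun p => if p.1 ∈ A then p else (e * p.2, e⁻¹ * p.1)) ?_ ?_
  · rintro ⟨a', b'⟩ hp
    dsimp only
    simp only [Finset.mem_coe, Finset.mem_filter, Finset.mem_product, Finset.mem_union,
      Finset.mem_inter] at hp
    obtain ⟨⟨ha', hb'⟩, hmul⟩ := hp
    by_cases hA' : a' ∈ A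
    · simp only [hA', if_pos]
      simp only [Finset.mem_coe, Finset.mem_filter, Finset.mem_product]
      exact ⟨⟨hA', hb'.1⟩, hmul⟩
    · rw [if_neg hA']
      simp only [Finset.mem_coe, Finset.mem_filter, Finset.mem_product]
      have haeB : a' ∈ e • B := ha'.resolve_left hA'
      obtain ⟨b₁, hb₁, rfl⟩ := Finset.mem_smul_finset.1 haeB
      have h1 : e⁻¹ * (e • b₁) = b₁ := by simp [smul_eq_mul]
      have h2 : e * b' ∈ A := by
        have := hb'.2
        rw [Finset.mem_inv_smul_finset_iff, smul_eq_mul] at this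
        exact this
    -- goal: (e * b') * (e⁻¹ * (e • b₁)) = x  and memberships
      refine ⟨⟨h2, by rw [h1]; exact hb₁⟩, ?_⟩
      rw [h1]
      have : e * b' * b₁ = (e • b₁) * b' := by
        simp only [smul_eq_mul]
        rw [mul_assoc, mul_comm b' b₁, ← mul_assoc]
      rw [this]
      exact hmul
  · rintro ⟨a₁, b₁⟩ h₁ ⟨a₂, b₂⟩ h₂ heq
    dsimp only at heq
    simp only [Finset.coe_filter, Set.mem_setOf_eq, Finset.mem_product, Finset.mem_union,
      Finset.mem_inter] at h₁ h₂
    by_cases c₁ : a₁ ∈ A <;> by_cases c₂ : a₂ ∈ A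
    · rwa [if_pos c₁, if_pos c₂] at heq
    · rw [if_pos c₁, if_neg c₂] at heq
      exfalso
      have hb₁ : b₁ = e⁻¹ * a₂ := congrArg Prod.snd heq
      have : e * b₁ ∈ A := by
        have := h₁.1.2.2
        rw [Finset.mem_inv_smul_finset_iff, smul_eq_mul] at this
        exact this
      rw [hb₁, mul_inv_cancel_left] at this
      exact c₂ this
    · rw [if_neg c₁, if_pos c₂] at heq
      exfalso
      have hb₂ : e⁻¹ * a₁ = b₂ := congrArg Prod.snd heq
      have : e * b₂ ∈ A := by
        have := h₂.1.2.2
        rw [Finset.mem_inv_smul_finset_iff, smul_eq_mul] at this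
        exact this
      rw [← hb₂, mul_inv_cancel_left] at this
      exact c₁ this
    · rw [if_neg c₁, if_neg c₂] at heq
      have e1 : e * b₁ = e * b₂ := congrArg Prod.fst heq
      have e2 : e⁻¹ * a₁ = e⁻¹ * a₂ := congrArg Prod.snd heq
      have : b₁ = b₂ := mul_left_cancel e1
      have : a₁ = a₂ := mul_left_cancel e2
      simp_all

/-! ### The main induction -/

theorem main_ineq : ∀ n : ℕ, ∀ A B : Finset G, A.card + 2 * B.card ≤ n →
    2 ≤ A.card → 2 ≤ B.card →
    2 * A.card + 2 * B.card ≤ Sg A B + 2 * max (alphaC A B) 2 := by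
  intro n
  induction n using Nat.strong_induction_on with
  | _ n ih =>
  have key : ∀ A B : Finset G, A.card + 2 * B.card ≤ n → 2 ≤ A.card → 2 ≤ B.card →
      (1 : G) ∈ A → (1 : G) ∈ B →
      2 * A.card + 2 * B.card ≤ Sg A B + 2 * max (alphaC A B) 2 := by
    intro A B hn hA hB h1A h1B
    classical
    have hANe : A.Nonempty := ⟨1, h1A⟩
    have hBNe : B.Nonempty := ⟨1, h1B⟩
    have hmax2 : 2 ≤ max (alphaC A B) 2 := le_max_right _ _
    -- the general bound Sg ≥ 2|A| coming from any b ∈ B, b ≠ 1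
    by_cases hB2 : B.card = 2
    · -- base case |B| = 2
      obtain ⟨b, hb⟩ : (B.erase 1).Nonempty := by
        rw [← Finset.card_pos, Finset.card_erase_of_mem h1B]; omega
      have hbB : b ∈ B := Finset.mem_of_mem_erase hb
      have hbne : b ≠ 1 := Finset.ne_of_mem_erase hb
      have hsub1 : A ∪ b • A ⊆ N 1 A B := by
        rw [N_one]
        intro x hx
        rcases Finset.mem_union.1 hx with hx | hx
        · exact mem_mul_of_left hx h1B
        · obtain ⟨y, hy, rfl⟩ := Finset.mem_smul_finset.1 hx
          exact Finset.mem_mul.2 ⟨y, hy, b, hbB, mul_comm y b⟩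
      have hsub2 : A ∩ b • A ⊆ N 2 A B := by
        intro x hx
        obtain ⟨hx1, hx2⟩ := Finset.mem_inter.1 hx
        obtain ⟨y, hy, rfl⟩ := Finset.mem_smul_finset.1 hx2
        refine Finset.mem_filter.2 ⟨mem_mul_of_left hx1 h1B, ?_⟩
        exact two_le_rep hx1 h1B hy hbB (mul_comm y b) hbne
      have hcard : (A ∪ b • A).card + (A ∩ b • A).card = 2 * A.card := by
        rw [Finset.card_union_add_card_inter, Finset.card_smul_finset]; ring
      have h1 : (A ∪ b • A).card ≤ (N 1 A B).card := Finset.card_le_card hsub1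
      have h2 : (A ∩ b • A).card ≤ (N 2 A B).card := Finset.card_le_card hsub2
      rw [Sg]
      omega
    have hB3 : 3 ≤ B.card := by omega
    -- Case (a): a useful Dyson transform exists
    by_cases hex : ∃ e ∈ A, 2 ≤ (B ∩ e⁻¹ • A).card ∧ (B ∩ e⁻¹ • A).card < B.card
    · obtain ⟨e, heA, hc2, hclt⟩ := hex
      have hcard : (A ∪ e • B).card + (B ∩ e⁻¹ • A).card = A.card + B.card := by
        have h1 : (A ∪ e • B).card + (A ∩ e • B).card = A.card + (e • B).card :=
          Finset.card_union_add_card_inter _ _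
        have h2 : e • (B ∩ e⁻¹ • A) = e • B ∩ A := by
          rw [Finset.smul_finset_inter, smul_inv_smul]
        have h3 : (B ∩ e⁻¹ • A).card = (A ∩ e • B).card := by
          rw [← Finset.card_smul_finset e (B ∩ e⁻¹ • A), h2, Finset.inter_comm]
        rw [Finset.card_smul_finset] at h1
        omega
      have hrep' : ∀ x, rep (A ∪ e • B) (B ∩ e⁻¹ • A) x ≤ rep A B x := rep_transform e A B
      have hSg : Sg (A ∪ e • B) (B ∩ e⁻¹ • A) ≤ Sg A B :=
        add_le_add (Finset.card_le_card (N_le_of_rep le_rfl hrep'))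
          (Finset.card_le_card (N_le_of_rep (by norm_num) hrep'))
      have hprod : (A ∪ e • B) * (B ∩ e⁻¹ • A) ⊆ A * B := by
        intro x hx
        exact rep_pos_iff.1 (lt_of_lt_of_le (rep_pos_iff.2 hx) (hrep' x))
      have hαle : alphaC (A ∪ e • B) (B ∩ e⁻¹ • A) ≤ alphaC A B := alpha_mono hprod
      have hA'2 : 2 ≤ (A ∪ e • B).card :=
        le_trans hA (Finset.card_le_card Finset.subset_union_left)
      have hmeas : (A ∪ e • B).card + 2 * (B ∩ e⁻¹ • A).card < n := by omega
      have hIH := ih _ hmeas (A ∪ e • B) (B ∩ e⁻¹ • A) le_rfl hA'2 hc2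
      have hmaxle : max (alphaC (A ∪ e • B) (B ∩ e⁻¹ • A)) 2 ≤ max (alphaC A B) 2 :=
        max_le_max hαle le_rfl
      omega
    · -- Cases (b), (c)
      push_neg at hex
      have hdich : ∀ e ∈ A, (∀ b ∈ B, e * b ∈ A) ∨ (∀ b ∈ B, e * b ∈ A → b = 1) := by
        intro e he
        have h1mem : (1 : G) ∈ B ∩ e⁻¹ • A := by
          refine Finset.mem_inter.2 ⟨h1B, ?_⟩
          rw [Finset.mem_inv_smul_finset_iff, smul_eq_mul, mul_one]
          exact he
        have hsub : B ∩ e⁻¹ • A ⊆ B := Finset.inter_subset_left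
        by_cases h2 : 2 ≤ (B ∩ e⁻¹ • A).card
        · have hge : B.card ≤ (B ∩ e⁻¹ • A).card := by
            have := hex e he h2; omega
          have heqB : B ∩ e⁻¹ • A = B := Finset.eq_of_subset_of_card_le hsub hge
          left
          intro b hb
          have : b ∈ B ∩ e⁻¹ • A := by rw [heqB]; exact hb
          have := (Finset.mem_inter.1 this).2
          rwa [Finset.mem_inv_smul_finset_iff, smul_eq_mul] at this
        · have hpos : 0 < (B ∩ e⁻¹ • A).card := Finset.card_pos.2 ⟨1, h1mem⟩
          have hone : (B ∩ e⁻¹ • A).card = 1 := by omega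
          obtain ⟨c, hc⟩ := Finset.card_eq_one.1 hone
          have hc1 : c = 1 := by
            have := h1mem; rw [hc] at this
            exact (Finset.mem_singleton.1 this).symm
          right
          intro b hb hba
          have : b ∈ B ∩ e⁻¹ • A := by
            refine Finset.mem_inter.2 ⟨hb, ?_⟩
            rwa [Finset.mem_inv_smul_finset_iff, smul_eq_mul]
          rw [hc, hc1] at this
          simpa using this
      set A₁ := A.filter (fun a => ∀ b ∈ B, a * b ∈ A) with hA₁def
      set A₂ := A \ A₁ with hA₂def
      have hA₁sub : A₁ ⊆ A := Finset.filter_subset _ _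
      have hA₂sub : A₂ ⊆ A := Finset.sdiff_subset
      have hA₁prop : ∀ a ∈ A₁, ∀ b ∈ B, a * b ∈ A := by
        intro a ha; exact (Finset.mem_filter.1 ha).2
      have hA₂prop : ∀ a ∈ A₂, ∀ b ∈ B, a * b ∈ A → b = 1 := by
        intro a ha
        obtain ⟨haA, hnot⟩ := Finset.mem_sdiff.1 ha
        rcases hdich a haA with h | h
        · exact absurd (Finset.mem_filter.2 ⟨haA, h⟩) hnot
        · exact h
      have hcardsplit : A₁.card + A₂.card = A.card := by
        have h2 : A₂.card = A.card - A₁.card := by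
          rw [hA₂def]; exact Finset.card_sdiff_of_subset hA₁sub
        have h3 : A₁.card ≤ A.card := Finset.card_le_card hA₁sub
        omega
      by_cases hA₂e : A₂ = ∅
      · -- Case (b): A*B = A, stabilizer coset
        have hA₁eq : A₁ = A := by
          have : A ⊆ A₁ := by
            intro a ha
            by_contra hna
            have haA₂ : a ∈ A₂ := by rw [hA₂def]; exact Finset.mem_sdiff.2 ⟨ha, hna⟩
            rw [hA₂e] at haA₂
            exact absurd haA₂ (Finset.notMem_empty a)
          exact Finset.Subset.antisymm hA₁sub this
        have hall : ∀ a ∈ A, ∀ b ∈ B, a * b ∈ A := by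
          intro a ha; exact hA₁prop a (hA₁eq ▸ ha)
        have hstab : ∀ b ∈ B, b • A = A := by
          intro b hb
          refine Finset.eq_of_subset_of_card_le ?_ (by rw [Finset.card_smul_finset])
          intro x hx
          obtain ⟨a, ha, rfl⟩ := Finset.mem_smul_finset.1 hx
          rw [smul_eq_mul, mul_comm]
          exact hall a ha b hb
        set K := MulAction.stabilizer G A with hKdef
        have hBK : ∀ b ∈ B, b ∈ K := fun b hb => MulAction.mem_stabilizer_iff.2 (hstab b hb)
        have hKA : ∀ k : G, k ∈ K → ∀ x ∈ A, x * k ∈ A := by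
          intro k hk x hx
          have hkA : k • A = A := MulAction.mem_stabilizer_iff.1 hk
          have : k * x ∈ k • A := Finset.smul_mem_smul_finset hx
          rw [hkA] at this
          rwa [mul_comm]
        have hKsubA : (K : Set G) ⊆ (A : Set G) := by
          intro k hk
          have := hKA k hk 1 h1A
          rwa [one_mul] at this
        have hfin : (K : Set G).Finite := Set.Finite.subset A.finite_toSet hKsubA
        set C := hfin.toFinset with hCdef
        have hCcoe : (C : Set G) = (1 : G) • (K : Set G) := by
          rw [hCdef, Set.Finite.coe_toFinset, one_smul]
        have hABA : A * B = A := by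
          apply Finset.Subset.antisymm
          · intro x hx
            obtain ⟨a, ha, b, hb, rfl⟩ := Finset.mem_mul.1 hx
            exact hall a ha b hb
          · intro x hx; exact mem_mul_of_left hx h1B
        have hCsub : C ⊆ A * B := by
          rw [hABA]
          intro k hk
          rw [hCdef, Set.Finite.mem_toFinset] at hk
          exact hKsubA hk
        have hBC : B ⊆ C := by
          intro b hb
          rw [hCdef, Set.Finite.mem_toFinset]
          exact hBK b hb
        have hαB : B.card ≤ alphaC A B :=
          le_trans (Finset.card_le_card hBC) (coset_card_le_alpha K 1 C hCcoe hCsub)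
        have hrep2 : ∀ x ∈ A, 2 ≤ rep A B x := by
          intro x hx
          have hinj : B.card ≤ rep A B x := by
            rw [rep]
            refine Finset.card_le_card_of_injOn (fun b => (x * b⁻¹, b)) ?_ ?_
            · intro b hb
              simp only [Finset.mem_coe, Finset.mem_filter, Finset.mem_product]
              refine ⟨⟨?_, hb⟩, by simp⟩
              exact hKA b⁻¹ (inv_mem (hBK b hb)) x hx
            · intro b₁ _ b₂ _ h
              simpa using congrArg Prod.snd h
          omega
        have hN1 : N 1 A B = A := by
          rw [N_one, hABA]
        have hN2 : N 2 A B = A := by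
          rw [N, hABA]
          exact Finset.filter_true_of_mem hrep2
        have : Sg A B = 2 * A.card := by rw [Sg, hN1, hN2]; ring
        have hmaxα : B.card ≤ max (alphaC A B) 2 := le_trans hαB (le_max_left _ _)
        omega
      · -- Case (c)
        have hA₂ne : A₂.Nonempty := Finset.nonempty_of_ne_empty hA₂e
        set Bt := B.erase 1 with hBtdef
        have hBtsub : Bt ⊆ B := Finset.erase_subset _ _
        have hBtcard : Bt.card = B.card - 1 := Finset.card_erase_of_mem h1B
        have hBt2 : 2 ≤ Bt.card := by omega
        have hBtNe : Bt.Nonempty := by rw [← Finset.card_pos]; omega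
        have hdisj : ∀ x ∈ A₂ * Bt, x ∉ A := by
          intro x hx hxA
          obtain ⟨a, ha, b, hb, rfl⟩ := Finset.mem_mul.1 hx
          exact (Finset.ne_of_mem_erase hb) (hA₂prop a ha b (hBtsub hb) hxA)
        by_cases hA₁e : A₁ = ∅
        · -- Case (c1)
          have hA₂A : A₂ = A := by rw [hA₂def, hA₁e, Finset.sdiff_empty]
          have hdisjA : ∀ x ∈ A * Bt, x ∉ A := by
            intro x hx
            have hx2 : x ∈ A₂ * Bt := by rw [hA₂A]; exact hx
            exact hdisj x hx2
          -- |N1 A B| ≥ |A| + |A * Bt|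
          have hsubN1 : A ∪ A * Bt ⊆ N 1 A B := by
            rw [N_one]
            intro x hx
            rcases Finset.mem_union.1 hx with hx | hx
            · exact mem_mul_of_left hx h1B
            · exact Finset.mul_subset_mul_left hBtsub hx
          have hdisj' : Disjoint A (A * Bt) := by
            rw [Finset.disjoint_right]
            intro x hx
            exact hdisjA x hx
          have hN1ge : A.card + (A * Bt).card ≤ (N 1 A B).card := by
            rw [← Finset.card_union_of_disjoint hdisj']
            exact Finset.card_le_card hsubN1
          have hN2ge : (N 2 A Bt).card ≤ (N 2 A B).card :=
            Finset.card_le_card (N_mono (by norm_num) Finset.Subset.rfl hBtsub)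
          have hmeas : A.card + 2 * Bt.card < n := by omega
          have hIH := ih _ hmeas A Bt le_rfl hA hBt2
          have hαle : alphaC A Bt ≤ alphaC A B :=
            alpha_mono (Finset.mul_subset_mul_left hBtsub)
          have hmaxle : max (alphaC A Bt) 2 ≤ max (alphaC A B) 2 := max_le_max hαle le_rfl
          have hN1Bt : N 1 A Bt = A * Bt := N_one
          rw [Sg] at hIH ⊢
          rw [hN1Bt] at hIH
          omega
        · -- Case (c2)
          have hA₁ne : A₁.Nonempty := Finset.nonempty_of_ne_empty hA₁e
          obtain ⟨e₁, he₁⟩ := hA₁ne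
          have hBA : B.card ≤ A.card := by
            refine Finset.card_le_card_of_injOn (fun b => e₁ * b) ?_ ?_
            · intro b hb; exact hA₁prop e₁ he₁ b hb
            · intro b₁ _ b₂ _ h; exact mul_left_cancel h
          have hA₁B : ∀ x ∈ A₁ * B, x ∈ A := by
            intro x hx
            obtain ⟨a, ha, b, hb, rfl⟩ := Finset.mem_mul.1 hx
            exact hA₁prop a ha b hb
          have hA₂card : 1 ≤ A₂.card := Finset.card_pos.2 hA₂ne
          by_cases hA₂2 : 2 ≤ A₂.card
          · -- Case (c2a)
            have hsubN1 : A ∪ A₂ * Bt ⊆ N 1 A B := by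
              rw [N_one]
              intro x hx
              rcases Finset.mem_union.1 hx with hx | hx
              · exact mem_mul_of_left hx h1B
              · exact Finset.mul_subset_mul hA₂sub hBtsub hx
            have hdisj1 : Disjoint A (A₂ * Bt) := by
              rw [Finset.disjoint_right]
              intro x hx
              exact hdisj x hx
            have hN1ge : A.card + (A₂ * Bt).card ≤ (N 1 A B).card := by
              rw [← Finset.card_union_of_disjoint hdisj1]
              exact Finset.card_le_card hsubN1
            -- N2 ⊇ A₁ * Bt ⊔ N 2 A₂ Bt
            have hsubA₁Bt : A₁ * Bt ⊆ N 2 A B := by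
              intro x hx
              obtain ⟨a, ha, b, hb, rfl⟩ := Finset.mem_mul.1 hx
              have hxA : a * b ∈ A := hA₁prop a ha b (hBtsub hb)
              refine Finset.mem_filter.2 ⟨mem_mul_of_left hxA h1B, ?_⟩
              exact two_le_rep hxA h1B (hA₁sub ha) (hBtsub hb) rfl (Finset.ne_of_mem_erase hb)
            have hsubN2' : N 2 A₂ Bt ⊆ N 2 A B := N_mono (by norm_num) hA₂sub hBtsub
            have hdisj2 : Disjoint (A₁ * Bt) (N 2 A₂ Bt) := by
              rw [Finset.disjoint_left]
              intro x hx hx2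
              have hxA : x ∈ A := hA₁B x (Finset.mul_subset_mul_left hBtsub hx)
              exact hdisj x (N_subset_mul hx2) hxA
            have hN2ge : (A₁ * Bt).card + (N 2 A₂ Bt).card ≤ (N 2 A B).card := by
              rw [← Finset.card_union_of_disjoint hdisj2]
              exact Finset.card_le_card (Finset.union_subset hsubA₁Bt hsubN2')
            have hA₁Bt : A₁.card ≤ (A₁ * Bt).card := Finset.card_le_card_mul_right hBtNe
            have hmeas : A₂.card + 2 * Bt.card < n := by
              have := Finset.card_le_card hA₂sub; omega
            have hIH := ih _ hmeas A₂ Bt le_rfl hA₂2 hBt2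
            have hαle : alphaC A₂ Bt ≤ alphaC A B :=
              alpha_mono (Finset.mul_subset_mul hA₂sub hBtsub)
            have hmaxle : max (alphaC A₂ Bt) 2 ≤ max (alphaC A B) 2 := max_le_max hαle le_rfl
            have hN1A₂ : N 1 A₂ Bt = A₂ * Bt := N_one
            rw [Sg] at hIH ⊢
            rw [hN1A₂] at hIH
            omega
          · -- Case (c2b) : |A₂| = 1
            have hA₂1 : A₂.card = 1 := by omega
            have hA₁card : A₁.card = A.card - 1 := by omega
            have hA₁2 : 2 ≤ A₁.card := by omega
            -- Sg A B ≥ Sg A₁ B + |A₂ * Bt|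
            have hsub1 : N 1 A₁ B ∪ N 1 A₂ Bt ⊆ N 1 A B :=
              Finset.union_subset (N_mono le_rfl hA₁sub Finset.Subset.rfl)
                (N_mono le_rfl hA₂sub hBtsub)
            have hsub2 : N 2 A₁ B ∪ N 2 A₂ Bt ⊆ N 2 A B :=
              Finset.union_subset (N_mono (by norm_num) hA₁sub Finset.Subset.rfl)
                (N_mono (by norm_num) hA₂sub hBtsub)
            have hdisjN : ∀ i j : ℕ, Disjoint (N i A₁ B) (N j A₂ Bt) := by
              intro i j
              rw [Finset.disjoint_left]
              intro x hx hx2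
              exact hdisj x (N_subset_mul hx2) (hA₁B x (N_subset_mul hx))
            have hN1ge : (N 1 A₁ B).card + (N 1 A₂ Bt).card ≤ (N 1 A B).card := by
              rw [← Finset.card_union_of_disjoint (hdisjN 1 1)]
              exact Finset.card_le_card hsub1
            have hN2ge : (N 2 A₁ B).card + (N 2 A₂ Bt).card ≤ (N 2 A B).card := by
              rw [← Finset.card_union_of_disjoint (hdisjN 2 2)]
              exact Finset.card_le_card hsub2
            have hN1A₂ : N 1 A₂ Bt = A₂ * Bt := N_one
            have hN1A₂c : (N 1 A₂ Bt).card = (A₂ * Bt).card := by rw [hN1A₂]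
            have hA₂Bt : Bt.card ≤ (A₂ * Bt).card := Finset.card_le_card_mul_left hA₂ne
            have hmeas : A₁.card + 2 * B.card < n := by omega
            have hIH := ih _ hmeas A₁ B le_rfl hA₁2 hB
            have hαle : alphaC A₁ B ≤ alphaC A B :=
              alpha_mono (Finset.mul_subset_mul_right hA₁sub)
            have hmaxle : max (alphaC A₁ B) 2 ≤ max (alphaC A B) 2 := max_le_max hαle le_rfl
            rw [Sg] at hIH ⊢
            omega
  -- reduce the general case to the case 1 ∈ A, 1 ∈ B by translation
  intro A B hn hA hB
  have hANe : A.Nonempty := Finset.card_pos.1 (by omega)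
  have hBNe : B.Nonempty := Finset.card_pos.1 (by omega)
  obtain ⟨a₀, ha₀⟩ := hANe
  obtain ⟨b₀, hb₀⟩ := hBNe
  have h1A : (1 : G) ∈ a₀⁻¹ • A := by
    rw [Finset.mem_inv_smul_finset_iff, smul_eq_mul, mul_one]; exact ha₀
  have h1B : (1 : G) ∈ b₀⁻¹ • B := by
    rw [Finset.mem_inv_smul_finset_iff, smul_eq_mul, mul_one]; exact hb₀
  have hcA : (a₀⁻¹ • A).card = A.card := Finset.card_smul_finset _ _
  have hcB : (b₀⁻¹ • B).card = B.card := Finset.card_smul_finset _ _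
  have := key (a₀⁻¹ • A) (b₀⁻¹ • B) (by omega) (by omega) (by omega) h1A h1B
  rwa [Sg_smul, alpha_smul, hcA, hcB] at this

theorem stmt11 (A B : Finset G) (h1 : (1 : G) ∈ A ∩ B) (htB : 2 ≤ B.card)
    (hBA : B.card ≤ A.card) (hα : 2 ≤ alphaC A B) :
    2 * ((A.card : ℤ) + B.card - 1 - alphaC A B) + 1 <
      ((N 1 A B).card : ℤ) + ((N 2 A B).card : ℤ) := by
  have hA2 : 2 ≤ A.card := le_trans htB hBA
  have hmain := main_ineq (A.card + 2 * B.card) A B le_rfl hA2 htB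
  rw [Sg, max_eq_left hα] at hmain
  omega
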